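/- In the singular twin group ST₃, the identity (s₁s₂)³ = (s₁s₂τ₂s₁)(s₂s₁τ₁s₂)⁻¹ holds. -/

import Mathlib

/-- Free-group letters for `ST₃`: `Sum.inl i` is `s_{i+1}`, `Sum.inr i` is `τ_{i+1}`. -/
abbrev STLetter := Fin 2 ⊕ Fin 2

def fs (i : Fin 2) : FreeGroup STLetter := FreeGroup.of (Sum.inl i)
def ft (i : Fin 2) : FreeGroup STLetter := FreeGroup.of (Sum.inr i)

/-- Relators of `ST₃`: `s₁² = s₂² = 1`, `τᵢsᵢ = sᵢτᵢ`, `s₁s₂τ₁ = τ₂s₁s₂`,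
`τ₁s₂s₁ = s₂s₁τ₂`. -/
def st3Rels : Set (FreeGroup STLetter) :=
  {fs 0 * fs 0, fs 1 * fs 1,
   ft 0 * fs 0 * (fs 0 * ft 0)⁻¹, ft 1 * fs 1 * (fs 1 * ft 1)⁻¹,
   fs 0 * fs 1 * ft 0 * (ft 1 * fs 0 * fs 1)⁻¹,
   ft 0 * fs 1 * fs 0 * (fs 1 * fs 0 * ft 1)⁻¹}

/-- The singular twin group `ST₃`. -/
def ST3 := PresentedGroup st3Rels

instance : Group ST3 := by unfold ST3; infer_instance

def s₁ : ST3 := PresentedGroup.of (Sum.inl 0)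
def s₂ : ST3 := PresentedGroup.of (Sum.inl 1)
def τ₁ : ST3 := PresentedGroup.of (Sum.inr 0)
def τ₂ : ST3 := PresentedGroup.of (Sum.inr 1)

/- Both sides, multiplied on the right by `b * a * t * b`, collapse to `a * b * a * b * t * b`:
the left one because `a` and `b` are involutions, the right one because `t' * a = a * b * t * b`. -/
theorem mul_pow_three_eq_of_mul_self_eq_one {G : Type*} [Group G] {a b t t' : G}
    (ha : a * a = 1) (hb : b * b = 1) (h : a * b * t = t' * a * b) :
    (a * b) ^ 3 = a * b * t' * a * (b * a * t * b)⁻¹ := by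
  have cancel_a (x : G) : a * (a * x) = x := by rw [← mul_assoc, ha, one_mul]
  have cancel_b (x : G) : b * (b * x) = x := by rw [← mul_assoc, hb, one_mul]
  have ht' : t' * a = a * b * t * b := by
    rw [h, mul_assoc _ b, hb, mul_one]
  rw [eq_mul_inv_iff_mul_eq]
  calc (a * b) ^ 3 * (b * a * t * b) = a * b * (a * b * t * b) := by
        simp only [pow_succ, pow_zero, one_mul, mul_assoc, cancel_a, cancel_b]
    _ = a * b * t' * a := by rw [← ht', mul_assoc (a * b)]

theorem s₁_mul_self : s₁ * s₁ = 1 :=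
  PresentedGroup.one_of_mem (x := fs 0 * fs 0) (by simp [st3Rels])

theorem s₂_mul_self : s₂ * s₂ = 1 :=
  PresentedGroup.one_of_mem (x := fs 1 * fs 1) (by simp [st3Rels])

theorem s₁_mul_s₂_mul_τ₁ : s₁ * s₂ * τ₁ = τ₂ * s₁ * s₂ :=
  PresentedGroup.mk_eq_mk_of_mul_inv_mem (x := fs 0 * fs 1 * ft 0) (y := ft 1 * fs 0 * fs 1)
    (by simp [st3Rels])

/-- in `ST₃`, the identity `(s₁s₂)³ = (s₁s₂τ₂s₁)(s₂s₁τ₁s₂)⁻¹` holds. -/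
theorem stmt13 : (s₁ * s₂) ^ 3 = (s₁ * s₂ * τ₂ * s₁) * (s₂ * s₁ * τ₁ * s₂)⁻¹ :=
  mul_pow_three_eq_of_mul_self_eq_one s₁_mul_self s₂_mul_self s₁_mul_s₂_mul_τ₁
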